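/- arXiv:2603.20302 — 3 statements merged into one kernel-verified Lean document; each statement's English description precedes it below -/
import Mathlib

section
/- Let m₁ ≥ m₂ be integers, k a natural number, and n ≥ max(k, m₁) a natural number. If n < m₁ + m₂ ≤ 2n − k, then the algebra A = IDD(K^k_n, m₁, m₂) is nilpotent, i.e., there exists N ≥ 1 with A^{⋄N} = 0. -/
/-- The structure constant `c_m(i)`: the falling factorial `i(i-1)⋯(i-m+1)` when `m ≥ 0`,
and `1/((i+1)(i+2)⋯(i-m))` when `m < 0`. -/
noncomputable def cc (m : ℤ) (i : ℕ) : ℂ :=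
  if 0 ≤ m then ∏ t ∈ Finset.range m.toNat, ((i : ℂ) - (t : ℂ))
  else (∏ t ∈ Finset.range (-m).toNat, ((i : ℂ) + (t : ℂ) + 1))⁻¹

/-- The index set `{i : ℕ | k ≤ i ≤ N}` (with `N ∈ ℕ ∪ {∞}`). -/
abbrev Idx (k : ℕ) (N : ℕ∞) := {i : ℕ // k ≤ i ∧ (i : ℕ∞) ≤ N}

/-- The underlying vector space of `IDD(K^k_N, m₁, m₂)`: the complex vector space with
basis `{e_i : k ≤ i ≤ N}`. -/
abbrev IDD (k : ℕ) (N : ℕ∞) := Idx k N →₀ ℂ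

/- The multiplication of `IDD(K^k_N, m₁, m₂)`:
`e_i ⋄ e_j = c_{m₁}(i) c_{m₂}(j) e_{i+j-m₁-m₂}` when `k ≤ i+j-m₁-m₂ ≤ N`, and `0` otherwise,
extended bilinearly. -/
open Classical in
noncomputable def dmul (k : ℕ) (N : ℕ∞) (m₁ m₂ : ℤ) (x y : IDD k N) : IDD k N :=
  x.sum fun i xi => y.sum fun j yj =>
    if h : ∃ p : Idx k N, (p.1 : ℤ) = (i.1 : ℤ) + (j.1 : ℤ) - (m₁ + m₂) then
      Finsupp.single h.choose (xi * yj * cc m₁ i.1 * cc m₂ j.1)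
    else 0

/- The powers `A^{⋄t}`: `A^{⋄1} = A`, `A^{⋄t} = Σ_{i+j=t, i,j≥1} span(A^{⋄i} ⋄ A^{⋄j})`. -/
noncomputable def dpow (k : ℕ) (N : ℕ∞) (m₁ m₂ : ℤ) : ℕ → Submodule ℂ (IDD k N)
  | 0 => ⊥
  | 1 => ⊤
  | t + 2 =>
      ⨆ i ∈ Finset.Icc 1 (t + 1), Submodule.span ℂ
        {z | ∃ x ∈ dpow k N m₁ m₂ i, ∃ y ∈ dpow k N m₁ m₂ (t + 2 - i),
          z = dmul k N m₁ m₂ x y}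
  decreasing_by
  · simp only [Finset.mem_Icc] at *; omega
  · simp only [Finset.mem_Icc] at *; omega

/-- Elements supported on indices `≤ b`. -/
noncomputable def supbd (k : ℕ) (N : ℕ∞) (b : ℤ) : Submodule ℂ (IDD k N) where
  carrier := {x | ∀ p : Idx k N, x p ≠ 0 → (p.1 : ℤ) ≤ b}
  add_mem' := by
    intro x y hx hy p hp
    rcases eq_or_ne (x p) 0 with h | h
    · exact hy p (fun h2 => hp (by simp [Finsupp.add_apply, h, h2]))
    · exact hx p h
  zero_mem' := by intro p hp; simp at hp
  smul_mem' := by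
    intro c x hx p hp
    exact hx p (fun h => hp (by simp [Finsupp.smul_apply, h]))

lemma supbd_mono (k : ℕ) (N : ℕ∞) {a b : ℤ} (h : a ≤ b) :
    supbd k N a ≤ supbd k N b := fun x hx p hp => (hx p hp).trans h

lemma dmul_mem (k : ℕ) (N : ℕ∞) (m₁ m₂ : ℤ) {a b : ℤ} {x y : IDD k N}
    (hx : x ∈ supbd k N a) (hy : y ∈ supbd k N b) :
    dmul k N m₁ m₂ x y ∈ supbd k N (a + b - (m₁ + m₂)) := by
  intro p hp
  rw [dmul, Finsupp.sum_apply] at hp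
  obtain ⟨i, hi, hip⟩ := Finset.exists_ne_zero_of_sum_ne_zero hp
  simp only [Finsupp.sum_apply] at hip
  obtain ⟨j, hj, hjp⟩ := Finset.exists_ne_zero_of_sum_ne_zero hip
  beta_reduce at hjp
  split at hjp
  · rename_i h
    have hne : x i * y j * cc m₁ i.1 * cc m₂ j.1 ≠ 0 := by
      intro h0; rw [h0, Finsupp.single_zero] at hjp; simp at hjp
    have hxi : x i ≠ 0 := fun h0 => hne (by simp [h0])
    have hyj : y j ≠ 0 := fun h0 => hne (by simp [h0])
    have hpc : p = h.choose := by
      by_contra hne2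
      rw [Finsupp.single_apply, if_neg (fun hh => hne2 hh.symm)] at hjp
      exact hjp rfl
    have := h.choose_spec
    rw [hpc, this]
    have h1 := hx i hxi
    have h2 := hy j hyj
    omega
  · simp at hjp

lemma supbd_top (k : ℕ) (n : ℕ) : (⊤ : Submodule ℂ (IDD k (n : ℕ∞))) ≤ supbd k n n := by
  intro x _ p _
  exact_mod_cast (Nat.cast_le.mp p.2.2 : p.1 ≤ n)

lemma dpow_le (k n : ℕ) (m₁ m₂ : ℤ) :
    ∀ t, 1 ≤ t → dpow k (n : ℕ∞) m₁ m₂ t ≤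
      supbd k n ((t : ℤ) * n - ((t : ℤ) - 1) * (m₁ + m₂)) := by
  intro t
  induction t using Nat.strong_induction_on with
  | _ t ih =>
    match t with
    | 0 => intro h; omega
    | 1 =>
      intro _
      rw [dpow]
      simpa using supbd_top k n
    | (s + 2) =>
      intro _
      rw [dpow]
      apply iSup₂_le
      intro i hi
      simp only [Finset.mem_Icc] at hi
      rw [Submodule.span_le]
      rintro z ⟨x, hx, y, hy, rfl⟩
      have h1 := ih i (by omega) hi.1 hx
      have h2 := ih (s + 2 - i) (by omega) (by omega) hy
      have h3 := dmul_mem k n m₁ m₂ h1 h2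
      refine supbd_mono k n (le_of_eq ?_) h3
      have : ((s + 2 - i : ℕ) : ℤ) = (s : ℤ) + 2 - (i : ℤ) := by
        push_cast [Nat.cast_sub (by omega : i ≤ s + 2)]; ring
      rw [this]
      push_cast
      ring

theorem stmt1 (k n : ℕ) (m₁ m₂ : ℤ) (hm : m₂ ≤ m₁) (hkn : k ≤ n) (hm1 : m₁ ≤ (n : ℤ))
    (hlev1 : (n : ℤ) < m₁ + m₂) (hlev2 : m₁ + m₂ ≤ 2 * (n : ℤ) - (k : ℤ)) :
    ∃ N, 1 ≤ N ∧ dpow k (n : ℕ∞) m₁ m₂ N = ⊥ := by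
  refine ⟨n - k + 2, by omega, ?_⟩
  have h := dpow_le k n m₁ m₂ (n - k + 2) (by omega)
  rw [eq_bot_iff]
  refine h.trans ?_
  intro x hx
  have hb : ((n - k + 2 : ℕ) : ℤ) * n - (((n - k + 2 : ℕ) : ℤ) - 1) * (m₁ + m₂) < (k : ℤ) := by
    have hc : ((n - k + 2 : ℕ) : ℤ) = (n : ℤ) - k + 2 := by
      push_cast [Nat.cast_sub hkn]; ring
    rw [hc]
    have hkz : (k : ℤ) ≤ n := by exact_mod_cast hkn
    nlinarith [mul_le_mul_of_nonneg_left (by linarith : (n : ℤ) + 1 ≤ m₁ + m₂)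
      (by linarith : (0:ℤ) ≤ (n : ℤ) - k + 1)]
  simp only [Submodule.mem_bot]
  ext p
  by_contra hp
  have := hx p (by simpa using hp)
  have hk := p.2.1
  omega
end

section
/- Let m₁ ≥ m₂ be integers, k a natural number, and n ≥ max(k, m₁) a natural number. If 2k − n ≤ m₁ + m₂ < k, then the algebra A = IDD(K^k_n, m₁, m₂) is nilpotent, i.e., there exists N ≥ 1 with A^{⋄N} = 0. -/
/-!
`A` is graded by the index `i` of `e_i`, and multiplication shifts degrees by the level:
`e_i ⋄ e_j` lies in degree `i + j - ℓ`. Hence the elements supported in degrees `≥ a` form a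
filtration with `F_a ⋄ F_b ⊆ F_{a+b-ℓ}`, and induction gives `A^{⋄t} ⊆ F_{t(k-ℓ)+ℓ}`. When `ℓ < k`
these bounds grow without limit, so they eventually exceed `n` and `A^{⋄t}` vanishes.
-/

noncomputable def supportedFrom (k : ℕ) (N : ℕ∞) (a : ℤ) : Submodule ℂ (IDD k N) :=
  Finsupp.supported ℂ ℂ {p : Idx k N | a ≤ (p.1 : ℤ)}

section supportedFrom

variable {k : ℕ} {N : ℕ∞}

lemma supportedFrom_antitone : Antitone (supportedFrom k N) :=
  fun _ _ hab => Finsupp.supported_mono fun _ hp => le_trans hab hp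

lemma supportedFrom_eq_top_of_le {a : ℤ} (ha : a ≤ k) : supportedFrom k N a = ⊤ := by
  rw [supportedFrom, ← Finsupp.supported_univ]
  congr 1
  exact Set.eq_univ_of_forall fun p => ha.trans (by exact_mod_cast p.2.1)

lemma supportedFrom_eq_bot_of_lt {n : ℕ} {a : ℤ} (ha : (n : ℤ) < a) :
    supportedFrom k (n : ℕ∞) a = ⊥ := by
  rw [supportedFrom, ← Finsupp.supported_empty]
  congr 1
  refine Set.eq_empty_of_forall_notMem fun p (hp : a ≤ (p.1 : ℤ)) => ?_
  have hpn : p.1 ≤ n := by exact_mod_cast p.2.2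
  omega

lemma dmul_mem_supportedFrom (m₁ m₂ : ℤ) {a b : ℤ} {x y : IDD k N}
    (hx : x ∈ supportedFrom k N a) (hy : y ∈ supportedFrom k N b) :
    dmul k N m₁ m₂ x y ∈ supportedFrom k N (a + b - (m₁ + m₂)) := by
  refine Submodule.finsuppSum_mem _ _ _ _ fun i hi => ?_
  refine Submodule.finsuppSum_mem _ _ _ _ fun j hj => ?_
  split_ifs with h
  · have hia : a ≤ (i.1 : ℤ) := hx (Finsupp.mem_support_iff.2 hi)
    have hjb : b ≤ (j.1 : ℤ) := hy (Finsupp.mem_support_iff.2 hj)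
    refine Finsupp.single_mem_supported ℂ _ ?_
    change _ ≤ ((h.choose.1 : ℕ) : ℤ)
    rw [h.choose_spec]
    omega
  · exact Submodule.zero_mem _

end supportedFrom

lemma dpow_le_supportedFrom (k : ℕ) (N : ℕ∞) (m₁ m₂ : ℤ) (t : ℕ) :
    dpow k N m₁ m₂ t ≤ supportedFrom k N (t * (k - (m₁ + m₂)) + (m₁ + m₂)) := by
  induction t using Nat.strong_induction_on with
  | _ t ih =>
    match t with
    | 0 => simp only [dpow, bot_le]
    | 1 => simp [supportedFrom_eq_top_of_le]
    | t + 2 =>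
      rw [dpow]
      refine iSup₂_le fun i hi => Submodule.span_le.2 ?_
      rintro _ ⟨x, hx, y, hy, rfl⟩
      rw [Finset.mem_Icc] at hi
      refine supportedFrom_antitone (le_of_eq ?_) <|
        dmul_mem_supportedFrom m₁ m₂ (ih i (by omega) hx) (ih (t + 2 - i) (by omega) hy)
      push_cast [Nat.cast_sub (by omega : i ≤ t + 2)]
      ring

theorem stmt5_general (k n : ℕ) (m₁ m₂ : ℤ)
    (hlev2 : m₁ + m₂ < (k : ℤ)) :
    ∃ N, 1 ≤ N ∧ dpow k (n : ℕ∞) m₁ m₂ N = ⊥ := by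
  refine ⟨n + 2, by omega, le_bot_iff.1 ?_⟩
  refine (dpow_le_supportedFrom k n m₁ m₂ (n + 2)).trans (supportedFrom_eq_bot_of_lt ?_).le
  -- `(n+2)(k-ℓ) + ℓ = (n+1)(k-ℓ) + k ≥ n + 1 + k`
  have hgap : ((n + 1 : ℕ) : ℤ) * 1 ≤ (n + 1 : ℕ) * (k - (m₁ + m₂)) := by gcongr; omega
  push_cast at hgap ⊢
  linarith [Int.natCast_nonneg k]

theorem stmt5 (k n : ℕ) (m₁ m₂ : ℤ) (hm : m₂ ≤ m₁) (hkn : k ≤ n) (hm1 : m₁ ≤ (n : ℤ))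
    (hlev1 : 2 * (k : ℤ) - (n : ℤ) ≤ m₁ + m₂) (hlev2 : m₁ + m₂ < (k : ℤ)) :
    ∃ N, 1 ≤ N ∧ dpow k (n : ℕ∞) m₁ m₂ N = ⊥ :=
  stmt5_general k n m₁ m₂ hlev2
end

section
/- Let m be an integer and k a natural number, and let A = IDD(K^k_∞, m, 0), i.e., the complex vector space with basis {e_i : i ≥ k} and product e_i ⋄ e_j = c_m(i)·e_{i+j−m} if i+j−m ≥ k and 0 otherwise. Define a second bilinear multiplication * on A by e_i * e_j = (c_m(i)·c_m(j)/c_m(i+j−m))·e_{i+j−m} whenever i+j−m ≥ k and c_m(i+j−m) ≠ 0, and e_i * e_j = 0 otherwise. Then A is a conservative algebra with respect to *: for all a, b, x, y ∈ A, b⋄(a⋄(x⋄y)) − b⋄((a⋄x)⋄y) − b⋄(x⋄(a⋄y)) − a⋄((b⋄x)⋄y) + (a⋄(b⋄x))⋄y + (b⋄x)⋄(a⋄y) − a⋄(x⋄(b⋄y)) + (a⋄x)⋄(b⋄y) + x⋄(a⋄(b⋄y)) = −(a*b)⋄(x⋄y) + ((a*b)⋄x)⋄y + x⋄((a*b)⋄y).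 -/
/- The second multiplication `*` on `IDD(K^k_∞, m, 0)`:
`e_i * e_j = (c_m(i)·c_m(j)/c_m(i+j−m))·e_{i+j−m}` whenever `i+j−m ≥ k` and
`c_m(i+j−m) ≠ 0`, and `e_i * e_j = 0` otherwise, extended bilinearly. -/
open Classical in
noncomputable def smul2 (k : ℕ) (m : ℤ) (x y : IDD k ⊤) : IDD k ⊤ :=
  x.sum fun i xi => y.sum fun j yj =>
    if h : ∃ p : Idx k ⊤, (p.1 : ℤ) = (i.1 : ℤ) + (j.1 : ℤ) - m ∧ cc m p.1 ≠ 0 then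
      Finsupp.single h.choose (xi * yj * (cc m i.1 * cc m j.1 / cc m h.choose.1))
    else 0

/-!
On basis vectors `e_u ⋄ e_v = c_m(u) e_{u+v-m}`, and the truncation at `k` never takes effect:
`c_m(u) ≠ 0` forces `u ≥ m`, hence `u + v - m ≥ v ≥ k`. So at `(e_α, e_β, e_ξ, e_η)` each of the
twelve terms is a multiple of `e_{α+β+ξ+η-3m}`. On the left the coefficients telescope to
`c(α) c(β) c(α+β+ξ-2m)`, on the right to `c(α) c(β) / c(α+β-m) · c(α+β-m) · c(α+β+ξ-2m)`, and these
agree since `c(α+β-m) = 0` forces `c(α) c(β) = 0`. The identity is multilinear, so basis vectors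
suffice.
-/

open Finsupp

theorem cc_zero (n : ℕ) : cc 0 n = 1 := by simp [cc]

theorem cc_eq_zero_iff (m : ℤ) (n : ℕ) : cc m n = 0 ↔ (n : ℤ) < m := by
  rw [cc]
  split_ifs with hm
  · rw [Finset.prod_eq_zero_iff]
    constructor
    · rintro ⟨t, ht, hnt⟩
      rw [Finset.mem_range] at ht
      rw [sub_eq_zero, Nat.cast_inj] at hnt
      omega
    · exact fun h => ⟨n, Finset.mem_range.2 (by omega), sub_self _⟩
  · rw [inv_eq_zero, Finset.prod_eq_zero_iff]
    refine ⟨fun ⟨t, _, ht⟩ => ?_, fun h => by omega⟩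
    exact absurd ht (by exact_mod_cast Nat.succ_ne_zero (n + t))

theorem cc_mul_cc_div_mul_cc (m : ℤ) (i j : ℕ) :
    cc m i * cc m j / cc m (i + j - m : ℤ).toNat * cc m (i + j - m : ℤ).toNat =
      cc m i * cc m j := by
  rcases eq_or_ne (cc m (i + j - m : ℤ).toNat) 0 with h | h
  · rw [cc_eq_zero_iff] at h
    have : (i : ℤ) < m ∨ (j : ℤ) < m := by omega
    rw [← cc_eq_zero_iff, ← cc_eq_zero_iff, ← mul_eq_zero] at this
    rw [this, zero_div, zero_mul]
  · exact div_mul_cancel₀ _ h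

noncomputable def bilinOfBasis {R ι M : Type*} [CommSemiring R] [AddCommMonoid M] [Module R M]
    (T : ι → ι → M) : (ι →₀ R) →ₗ[R] (ι →₀ R) →ₗ[R] M :=
  linearCombination R fun i => linearCombination R (T i)

theorem bilinOfBasis_apply {R ι M : Type*} [CommSemiring R] [AddCommMonoid M] [Module R M]
    (T : ι → ι → M) (x y : ι →₀ R) :
    bilinOfBasis T x y = x.sum fun i a => y.sum fun j b => (a * b) • T i j := by
  simp [bilinOfBasis, linearCombination_apply, Finsupp.smul_sum, mul_smul]

theorem bilinOfBasis_single_single {R ι M : Type*} [CommSemiring R] [AddCommMonoid M] [Module R M]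
    (T : ι → ι → M) (i j : ι) (a b : R) :
    bilinOfBasis T (single i a) (single j b) = (a * b) • T i j := by
  simp [bilinOfBasis, mul_smul]

/-- The basis vector `e_z`, taken to be `0` when `z` is not an index. -/
noncomputable def basisVec (k : ℕ) (N : ℕ∞) (z : ℤ) : IDD k N :=
  if h : (k : ℤ) ≤ z ∧ (z.toNat : ℕ∞) ≤ N then single ⟨z.toNat, by omega, h.2⟩ 1 else 0

theorem basisVec_natCast {k : ℕ} {N : ℕ∞} (i : Idx k N) : basisVec k N i = single i 1 := by
  rw [basisVec, dif_pos ⟨by exact_mod_cast i.2.1, by simpa using i.2.2⟩]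
  congr

theorem basisVec_of_forall_ne {k : ℕ} {N : ℕ∞} {z : ℤ} (h : ∀ i : Idx k N, (i : ℤ) ≠ z) :
    basisVec k N z = 0 :=
  dif_neg fun hz => h ⟨z.toNat, by omega, hz.2⟩ (by simp; omega)

theorem basisVec_of_le {k : ℕ} {z : ℤ} (hz : k ≤ z) :
    basisVec k ⊤ z = single ⟨z.toNat, by omega, le_top⟩ 1 :=
  dif_pos ⟨hz, le_top⟩

noncomputable def dmulₗ (k : ℕ) (N : ℕ∞) (m₁ m₂ : ℤ) : IDD k N →ₗ[ℂ] IDD k N →ₗ[ℂ] IDD k N :=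
  bilinOfBasis fun i j => (cc m₁ i * cc m₂ j) • basisVec k N (i + j - (m₁ + m₂))

theorem dmul_eq_dmulₗ (k : ℕ) (N : ℕ∞) (m₁ m₂ : ℤ) (x y : IDD k N) :
    dmul k N m₁ m₂ x y = dmulₗ k N m₁ m₂ x y := by
  rw [dmul, dmulₗ, bilinOfBasis_apply]
  refine sum_congr fun i _ => sum_congr fun j _ => ?_
  split_ifs with h
  · conv_rhs => rw [← h.choose_spec, basisVec_natCast, smul_single_one, smul_single,
      smul_eq_mul]
    simp only [mul_assoc]
  · rw [basisVec_of_forall_ne fun p hp => h ⟨p, hp⟩, smul_zero, smul_zero]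

-- Division by `c_m(i+j-m) = 0` returns `0`, which is exactly the second clause defining `*`.
noncomputable def smul2ₗ (k : ℕ) (m : ℤ) : IDD k ⊤ →ₗ[ℂ] IDD k ⊤ →ₗ[ℂ] IDD k ⊤ :=
  bilinOfBasis fun i j =>
    (cc m i * cc m j / cc m (i + j - m : ℤ).toNat) • basisVec k ⊤ (i + j - m)

theorem smul2_eq_smul2ₗ (k : ℕ) (m : ℤ) (x y : IDD k ⊤) :
    smul2 k m x y = smul2ₗ k m x y := by
  rw [smul2, smul2ₗ, bilinOfBasis_apply]
  refine sum_congr fun i _ => sum_congr fun j _ => ?_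
  split_ifs with h
  · conv_rhs => rw [← h.choose_spec.1, basisVec_natCast, smul_single_one, smul_single,
      Int.toNat_natCast, smul_eq_mul]
  · by_cases hz : ∃ p : Idx k ⊤, (p : ℤ) = i + j - m
    · obtain ⟨p, hp⟩ := hz
      have : cc m p = 0 := not_not.1 fun hc => h ⟨p, hp, hc⟩
      rw [← hp, Int.toNat_natCast, this, div_zero, zero_smul, smul_zero]
    · rw [basisVec_of_forall_ne fun p hp => hz ⟨p, hp⟩, smul_zero, smul_zero]

section Monomials

variable {k : ℕ} {m : ℤ} {u v : ℤ} {r s : ℂ}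

theorem dmulₗ_smul_basisVec (hu : r ≠ 0 → k ≤ u) (hv : s ≠ 0 → k ≤ v) :
    dmulₗ k ⊤ m 0 (r • basisVec k ⊤ u) (s • basisVec k ⊤ v) =
      (r * s * cc m u.toNat) • basisVec k ⊤ (u + v - m) := by
  rcases eq_or_ne r 0 with rfl | hr; · simp
  rcases eq_or_ne s 0 with rfl | hs; · simp
  replace hu := hu hr
  replace hv := hv hs
  rw [basisVec_of_le hu, basisVec_of_le hv, smul_single_one, smul_single_one, dmulₗ,
    bilinOfBasis_single_single, cc_zero, mul_one, smul_smul, add_zero]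
  congr 3
  simp
  omega

theorem smul2ₗ_smul_basisVec (hu : r ≠ 0 → k ≤ u) (hv : s ≠ 0 → k ≤ v) :
    smul2ₗ k m (r • basisVec k ⊤ u) (s • basisVec k ⊤ v) =
      (r * s * (cc m u.toNat * cc m v.toNat / cc m (u + v - m).toNat)) •
        basisVec k ⊤ (u + v - m) := by
  rcases eq_or_ne r 0 with rfl | hr; · simp
  rcases eq_or_ne s 0 with rfl | hs; · simp
  replace hu := hu hr
  replace hv := hv hs
  rw [basisVec_of_le hu, basisVec_of_le hv, smul_single_one, smul_single_one, smul2ₗ,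
    bilinOfBasis_single_single, smul_smul]
  congr 4 <;> simp <;> omega

end Monomials

/-- The conservativity identity `[L_b, [L_a, μ]] = -[L_{ν a b}, μ]` evaluated at `(x, y)`,
where `L` is left multiplication by `μ`. -/
def ConservativeIdentity {R V : Type*} [CommSemiring R] [AddCommGroup V] [Module R V]
    (μ ν : V →ₗ[R] V →ₗ[R] V) (a b x y : V) : Prop :=
  μ b (μ a (μ x y)) - μ b (μ (μ a x) y) - μ b (μ x (μ a y)) - μ a (μ (μ b x) y)
      + μ (μ a (μ b x)) y + μ (μ b x) (μ a y) - μ a (μ x (μ b y)) + μ (μ a x) (μ b y)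
      + μ x (μ a (μ b y))
    = -μ (ν a b) (μ x y) + μ (μ (ν a b) x) y + μ x (μ (ν a b) y)

theorem conservativeIdentity_of_single {R ι : Type*} [CommRing R]
    {μ ν : (ι →₀ R) →ₗ[R] (ι →₀ R) →ₗ[R] (ι →₀ R)}
    (h : ∀ (i j p q : ι) (r s t u : R),
      ConservativeIdentity μ ν (single i r) (single j s) (single p t) (single q u))
    (a b x y : ι →₀ R) : ConservativeIdentity μ ν a b x y := by
  unfold ConservativeIdentity at h ⊢
  induction a using Finsupp.induction_linear with
  | zero => simp
  | add a₁ a₂ h₁ h₂ =>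
    simp only [map_add, LinearMap.add_apply]
    linear_combination (norm := module) h₁ + h₂
  | single i r =>
  induction b using Finsupp.induction_linear with
  | zero => simp
  | add b₁ b₂ h₁ h₂ =>
    simp only [map_add, LinearMap.add_apply]
    linear_combination (norm := module) h₁ + h₂
  | single j s =>
  induction x using Finsupp.induction_linear with
  | zero => simp
  | add x₁ x₂ h₁ h₂ =>
    simp only [map_add, LinearMap.add_apply]
    linear_combination (norm := module) h₁ + h₂
  | single p t =>
  induction y using Finsupp.induction_linear with
  | zero => simp
  | add y₁ y₂ h₁ h₂ =>
    simp only [map_add]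
    linear_combination (norm := module) h₁ + h₂
  | single q u => exact h i j p q r s t u

theorem conservativeIdentity_single {k : ℕ} {m : ℤ} (i j p q : Idx k ⊤) (r s t u : ℂ) :
    ConservativeIdentity (dmulₗ k ⊤ m 0) (smul2ₗ k m) (single i r) (single j s) (single p t)
      (single q u) := by
  have hi : (k : ℤ) ≤ i := by exact_mod_cast i.2.1
  have hj : (k : ℤ) ≤ j := by exact_mod_cast j.2.1
  have hp : (k : ℤ) ≤ p := by exact_mod_cast p.2.1
  have hq : (k : ℤ) ≤ q := by exact_mod_cast q.2.1
  rw [ConservativeIdentity, ← smul_single_one i, ← smul_single_one j, ← smul_single_one p,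
    ← smul_single_one q, ← basisVec_natCast i, ← basisVec_natCast j, ← basisVec_natCast p,
    ← basisVec_natCast q]
  -- Every monomial `r • e_u` produced satisfies `r ≠ 0 → k ≤ u`, as the product lemmas require.
  simp (disch := intro h; simp only [ne_eq, mul_eq_zero, div_eq_zero_iff, cc_eq_zero_iff, not_or,
      not_lt] at h; omega) only
    [dmulₗ_smul_basisVec, smul2ₗ_smul_basisVec, Int.toNat_natCast]
  ring_nf
  simp only [← add_smul, ← sub_smul, ← neg_smul]
  congr 1
  linear_combination (norm := ring_nf)
    -(r * s * t * u * cc m (i + j + p - 2 * m : ℤ).toNat) * cc_mul_cc_div_mul_cc m i j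

/-- `IDD(K^k_∞, m, 0)` (whose product is `e_i ⋄ e_j = c_m(i)·e_{i+j−m}` when `i+j−m ≥ k`
and `0` otherwise, i.e. `dmul k ⊤ m 0`) is a conservative algebra with respect to the
multiplication `*` above. -/
theorem stmt7 (k : ℕ) (m : ℤ) (a b x y : IDD k ⊤) :
    dmul k ⊤ m 0 b (dmul k ⊤ m 0 a (dmul k ⊤ m 0 x y))
      - dmul k ⊤ m 0 b (dmul k ⊤ m 0 (dmul k ⊤ m 0 a x) y)
      - dmul k ⊤ m 0 b (dmul k ⊤ m 0 x (dmul k ⊤ m 0 a y))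
      - dmul k ⊤ m 0 a (dmul k ⊤ m 0 (dmul k ⊤ m 0 b x) y)
      + dmul k ⊤ m 0 (dmul k ⊤ m 0 a (dmul k ⊤ m 0 b x)) y
      + dmul k ⊤ m 0 (dmul k ⊤ m 0 b x) (dmul k ⊤ m 0 a y)
      - dmul k ⊤ m 0 a (dmul k ⊤ m 0 x (dmul k ⊤ m 0 b y))
      + dmul k ⊤ m 0 (dmul k ⊤ m 0 a x) (dmul k ⊤ m 0 b y)
      + dmul k ⊤ m 0 x (dmul k ⊤ m 0 a (dmul k ⊤ m 0 b y))
    = - dmul k ⊤ m 0 (smul2 k m a b) (dmul k ⊤ m 0 x y)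
      + dmul k ⊤ m 0 (dmul k ⊤ m 0 (smul2 k m a b) x) y
      + dmul k ⊤ m 0 x (dmul k ⊤ m 0 (smul2 k m a b) y) := by
  simp only [dmul_eq_dmulₗ, smul2_eq_smul2ₗ]
  exact conservativeIdentity_of_single conservativeIdentity_single a b x y
end
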